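/- Let g_1, g_2 be binary morphisms on X = {a,b} with g_1(a) = a^s, g_1(b) = a^{γ_1} b a^{γ_2}, g_2(a) = a^t, g_2(b) = a^{δ_1} b a^{β_1} ⋯ b a^{β_{q-1}} b a^{δ_2}, where s,t ≥ 1, q ≥ 2 and all exponents nonnegative. Then g_1 g_2 = g_2 g_1 if and only if either (i) g_1 is the identity morphism, or (ii) g_1(b) and g_2(b) are both powers of b. -/
import Mathlib


/-- Words over the binary alphabet: `false` is the letter `a`, `true` is the letter `b`. -/
abbrev Word := List Bool

/-- The morphism of the free monoid determined by the images `g` of the letters. -/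
def applyG (g : Bool → Word) (w : Word) : Word := w.flatMap g

/-- `a^n`. -/
def rep (n : ℕ) : Word := List.replicate n false

/-- `b a^{α 1} b a^{α 2} ⋯ b a^{α (p-1)} b`, a word with `p` occurrences of `b`. -/
def blockWord (p : ℕ) (α : ℕ → ℕ) : Word :=
  ((List.range (p - 1)).flatMap fun i => true :: rep (α (i + 1))) ++ [true]

/-- `w^k`. -/
def wordPow (w : Word) (k : ℕ) : Word := (List.replicate k w).flatten

/-- `u` and `v` are `a`-conjugates. -/
def AConj (u v : Word) : Prop :=
  ∃ p q r s : ℕ, ∃ w : Word,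
    u = rep p ++ w ++ rep q ∧ v = rep r ++ w ++ rep s ∧ p + q = r + s

/-- `w` is the infinite word `ω(g)`: for every `n`, the word obtained from `g^n(b)` by deleting
all occurrences of `a` preceding the first occurrence of `b` is a prefix of `w`. -/
def IsOmega (g : Bool → Word) (w : ℕ → Bool) : Prop :=
  ∀ n k : ℕ, ∀ hk : k < (((applyG g)^[n] [true]).dropWhile (fun x => !x)).length,
    (((applyG g)^[n] [true]).dropWhile (fun x => !x)).get ⟨k, hk⟩ = w k

/-- `Aw w i` (for `i ≥ 1`): the number of occurrences of `a` in `w` strictly between the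
`i`-th and `(i+1)`-th occurrences of `b` in `w`. -/
noncomputable def Aw (w : ℕ → Bool) (i : ℕ) : ℕ :=
  Nat.nth (fun n => w n = true) i - Nat.nth (fun n => w n = true) (i - 1) - 1

lemma applyG_nil (g : Bool → Word) : applyG g [] = [] := rfl
lemma applyG_cons (g : Bool → Word) (x : Bool) (w : Word) :
    applyG g (x :: w) = g x ++ applyG g w := rfl
lemma applyG_append (g : Bool → Word) (u v : Word) :
    applyG g (u ++ v) = applyG g u ++ applyG g v := by simp [applyG]

lemma rep_append (m n : ℕ) : rep m ++ rep n = rep (m + n) := by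
  simp [rep, ← List.replicate_add]

lemma applyG_rep (g : Bool → Word) (s : ℕ) (h : g false = rep s) (n : ℕ) :
    applyG g (rep n) = rep (s * n) := by
  induction n with
  | zero => simp [applyG, rep]
  | succ n ih =>
    rw [show rep (n+1) = false :: rep n from rfl, applyG_cons, h, ih, rep_append,
      Nat.mul_succ, Nat.add_comm]

lemma rep_true_inj : ∀ {m m' : ℕ} {v v' : Word},
    rep m ++ true :: v = rep m' ++ true :: v' → m = m' ∧ v = v' := by
  intro m
  induction m with
  | zero =>
    intro m' v v' h
    cases m' with
    | zero => simpa [rep] using h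
    | succ k => simp [rep, List.replicate_succ] at h
  | succ n ih =>
    intro m' v v' h
    cases m' with
    | zero => simp [rep, List.replicate_succ] at h
    | succ k =>
      rw [show rep (n+1) = false :: rep n from rfl,
          show rep (k+1) = false :: rep k from rfl] at h
      simp only [List.cons_append, List.cons.injEq, true_and] at h
      obtain ⟨h1, h2⟩ := ih h
      exact ⟨by omega, h2⟩

lemma exists_head_true (q' : ℕ) (f : ℕ → Word) :
    ∃ u, ((List.range q').map (· + 1)).flatMap (fun i => true :: f (i + 1)) ++ [true]
      = true :: u := by
  cases q' with
  | zero => exact ⟨[], by simp⟩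
  | succ k =>
    rw [List.range_succ_eq_map]
    refine ⟨f 2 ++ (((List.range k).map (· + 1)).map (· + 1)).flatMap
      (fun i => true :: f (i + 1)) ++ [true], ?_⟩
    simp only [List.map_cons, List.flatMap_cons, List.cons_append, List.map_map,
      List.append_assoc, List.cons.injEq, true_and]

lemma blockWord_shape (q' : ℕ) (β : ℕ → ℕ) :
    ∃ u, blockWord (q' + 2) β = true :: (rep (β 1) ++ true :: u) := by
  obtain ⟨u, hu⟩ := exists_head_true q' (fun i => rep (β i))
  refine ⟨u, ?_⟩
  unfold blockWord
  rw [show q' + 2 - 1 = q' + 1 from rfl, List.range_succ_eq_map]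
  simp only [List.flatMap_cons, List.cons_append, List.append_assoc]
  rw [hu]

lemma count_false_applyG (g : Bool → Word) (s : ℕ) (ha : g false = rep s)
    (hb : g true = [true]) : ∀ w : Word, (applyG g w).count false = s * w.count false := by
  intro w
  induction w with
  | nil => simp [applyG]
  | cons x w ih =>
    cases x <;> simp [applyG_cons, List.count_append, ih, ha, hb, rep, Nat.mul_succ] <;> omega

lemma eq_replicate_true (w : Word) (h : w.count false = 0) :
    w = List.replicate w.length true := by
  induction w with
  | nil => rfl
  | cons x w ih =>
    cases x
    · simp at h
    · rw [List.count_cons] at h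
      have h' : w.count false = 0 := by simpa using h
      rw [show (true :: w).length = w.length + 1 from rfl, List.replicate_succ]
      rw [← ih h']

lemma applyG_replicate_true (g : Bool → Word) (hb : g true = [true]) (m : ℕ) :
    applyG g (List.replicate m true) = List.replicate m true := by
  induction m with
  | zero => rfl
  | succ n ih => rw [List.replicate_succ, applyG_cons, hb, ih]; rfl

lemma applyG_id (g : Bool → Word) (ha : g false = [false]) (hb : g true = [true]) :
    ∀ w, applyG g w = w := by
  intro w; induction w with
  | nil => rfl
  | cons x w ih => cases x <;> simp [applyG_cons, ha, hb, ih]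

lemma comm_of_letters (g₁ g₂ : Bool → Word)
    (h : ∀ x, applyG g₁ (g₂ x) = applyG g₂ (g₁ x)) :
    applyG g₁ ∘ applyG g₂ = applyG g₂ ∘ applyG g₁ := by
  funext w
  simp only [Function.comp_apply]
  induction w with
  | nil => rfl
  | cons x w ih =>
    rw [applyG_cons, applyG_cons, applyG_append, applyG_append, h x, ih]

lemma rep_append' (m n : ℕ) (l : Word) : rep m ++ (rep n ++ l) = rep (m + n) ++ l := by
  rw [← List.append_assoc, rep_append]


/-- with `|g₁(b)|_b = 1` and `|g₂(b)|_b = q ≥ 2`, `g₁g₂ = g₂g₁` iff `g₁` is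
the identity morphism or both `g₁(b)`, `g₂(b)` are powers of `b`. -/
theorem stmt14 (s t : ℕ) (hs : 1 ≤ s) (ht : 1 ≤ t)
    (q : ℕ) (hq : 2 ≤ q)
    (γ₁ γ₂ δ₁ δ₂ : ℕ) (β : ℕ → ℕ)
    (g₁ g₂ : Bool → Word)
    (h₁a : g₁ false = rep s)
    (h₁b : g₁ true = rep γ₁ ++ [true] ++ rep γ₂)
    (h₂a : g₂ false = rep t)
    (h₂b : g₂ true = rep δ₁ ++ blockWord q β ++ rep δ₂) :
    applyG g₁ ∘ applyG g₂ = applyG g₂ ∘ applyG g₁ ↔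
      (g₁ false = [false] ∧ g₁ true = [true]) ∨
      ((∃ k : ℕ, g₁ true = List.replicate k true) ∧
        (∃ k : ℕ, g₂ true = List.replicate k true)) := by
  obtain ⟨q', rfl⟩ : ∃ q', q = q' + 2 := ⟨q - 2, by omega⟩
  obtain ⟨u, hu⟩ := blockWord_shape q' β
  have hg2 : g₂ true = rep δ₁ ++ true :: (rep (β 1) ++ true :: (u ++ rep δ₂)) := by
    rw [h₂b, hu]; simp [List.append_assoc]
  constructor
  · intro h
    have E : applyG g₁ (g₂ true) = applyG g₂ (g₁ true) := by
      have h' := congrFun h [true]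
      simp only [Function.comp_apply] at h'
      rwa [show applyG g₂ [true] = g₂ true by simp [applyG],
           show applyG g₁ [true] = g₁ true by simp [applyG]] at h'
    have hL : applyG g₁ (g₂ true)
        = rep (s * δ₁ + γ₁) ++ true :: (rep (γ₂ + s * β 1 + γ₁) ++ true ::
            (rep γ₂ ++ applyG g₁ (u ++ rep δ₂))) := by
      rw [hg2, applyG_append, applyG_cons, applyG_append, applyG_cons,
        applyG_rep g₁ s h₁a, applyG_rep g₁ s h₁a, h₁b]
      simp [rep_append', rep_append, List.append_assoc, Nat.add_assoc]
    have hR : applyG g₂ (g₁ true)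
        = rep (t * γ₁ + δ₁) ++ true :: (rep (β 1) ++ true ::
            (u ++ (rep δ₂ ++ rep (t * γ₂)))) := by
      rw [h₁b, applyG_append, applyG_append, applyG_rep g₂ t h₂a, applyG_rep g₂ t h₂a,
        show applyG g₂ [true] = g₂ true by simp [applyG], hg2]
      simp [rep_append', rep_append, List.append_assoc]
    have E0 := E
    rw [hL, hR] at E0
    obtain ⟨e1, E2⟩ := rep_true_inj E0
    obtain ⟨e2, _⟩ := rep_true_inj E2
    have hb1 : β 1 ≤ s * β 1 := Nat.le_mul_of_pos_left _ (by omega)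
    have hγ₁ : γ₁ = 0 := by omega
    have hγ₂ : γ₂ = 0 := by omega
    subst hγ₁; subst hγ₂
    have hg1b : g₁ true = [true] := by rw [h₁b]; simp [rep]
    rcases Nat.lt_or_ge s 2 with hs2 | hs2
    · left
      have hs1 : s = 1 := by omega
      subst hs1
      exact ⟨by rw [h₁a]; rfl, hg1b⟩
    · right
      refine ⟨⟨1, by simp [hg1b]⟩, ⟨(g₂ true).length, ?_⟩⟩
      have E' : applyG g₁ (g₂ true) = g₂ true := by
        rw [E, hg1b]; simp [applyG]
      have hc := count_false_applyG g₁ s h₁a hg1b (g₂ true)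
      rw [E'] at hc
      have hc0 : (g₂ true).count false = 0 := by
        rcases Nat.eq_zero_or_pos ((g₂ true).count false) with h0 | hp
        · exact h0
        · have := Nat.mul_le_mul_right ((g₂ true).count false) hs2
          omega
      exact eq_replicate_true _ hc0
  · rintro (⟨ha, hb⟩ | ⟨⟨k, hk⟩, ⟨m, hm⟩⟩)
    · apply comm_of_letters
      intro x
      rw [applyG_id g₁ ha hb]
      cases x
      · rw [ha]; simp [applyG]
      · rw [hb]; simp [applyG]
    · have hγ : γ₁ = 0 ∧ γ₂ = 0 := by
        have hcnt := congrArg (List.count false) (h₁b.symm.trans hk)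
        simp [rep, List.count_append, List.count_replicate] at hcnt
        constructor <;> omega
      have hg1b : g₁ true = [true] := by rw [h₁b, hγ.1, hγ.2]; simp [rep]
      apply comm_of_letters
      intro x
      cases x
      · rw [h₂a, h₁a, applyG_rep g₁ s h₁a, applyG_rep g₂ t h₂a, Nat.mul_comm]
      · rw [hm, hg1b, applyG_replicate_true g₁ hg1b m]
        simp [applyG, hm]
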